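/- Let F(z,w) = ∑_{n=0}^∞ fₙ(z)wⁿ be a Hartogs series on D = D₁ × D₂ satisfying condition (C1) and satisfying condition (C2) with a monic polynomial relation: Φ₀ ≡ 1 and t ≥ 2. Let Δ be a holomorphic function on D such that for every (z,w) ∈ D, Δ(z,w) = 0 if and only if the complex polynomial X ↦ ∑_{j=0}^t Φⱼ(z,w) X^{t−j} has a repeated complex root, and set T_Δ := {(z,w) ∈ D : Δ(z,w) = 0}. Assume D₁ is simply connected and assume there exist holomorphic functions f₁,…,f_m on D₁ such that T_Δ is the disjoint union over k = 1,…,m of the graphs {(z,w) ∈ D : w = f_k(z)}. Then F converges and is holomorphic on D. -/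

import Mathlib

open Filter Topology
open scoped ENNReal

noncomputable section

/-- The open disk `{w : ℂ | |w| < R}` of radius `R ∈ (0, ∞]` centered at the origin. -/
def disk (R : ℝ≥0∞) : Set ℂ := {w : ℂ | (‖w‖₊ : ℝ≥0∞) < R}

/-- The Hartogs series `∑ fₙ(z) wⁿ` converges at every point of `V` and
its sum function is holomorphic on `V`. -/
def HolSumOn {N : ℕ} (f : ℕ → (Fin N → ℂ) → ℂ) (V : Set ((Fin N → ℂ) × ℂ)) : Prop :=
  ∃ G : (Fin N → ℂ) × ℂ → ℂ, DifferentiableOn ℂ G V ∧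
    ∀ p ∈ V, Tendsto (fun m => ∑ n ∈ Finset.range m, f n p.1 * p.2 ^ n) atTop (𝓝 (G p))

/-- The formal identity `∑_{j=0}^{t} Φⱼ · F^{t-j} = 0` in `O(D₁)[[w]]`, expressed through the
coefficient families: every `w`-coefficient of the formal power series vanishes identically
on `D₁`. -/
def FormalAlgRel {N : ℕ} (f : ℕ → (Fin N → ℂ) → ℂ) (g : ℕ → ℕ → (Fin N → ℂ) → ℂ)
    (t : ℕ) (D₁ : Set (Fin N → ℂ)) : Prop :=
  ∀ m : ℕ, ∀ z ∈ D₁,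
    (PowerSeries.coeff (R := (Fin N → ℂ) → ℂ) m
      (∑ j ∈ Finset.range (t + 1),
        PowerSeries.mk (g j) * (PowerSeries.mk f) ^ (t - j))) z = 0

/-- Condition (C1). -/
def CondC1 {N : ℕ} (f : ℕ → (Fin N → ℂ) → ℂ) (D₁ : Set (Fin N → ℂ)) (R : ℝ≥0∞) : Prop :=
  ∃ S : Set (Fin N → ℂ), S ⊆ D₁ ∧ D₁ ⊆ closure S ∧
    ∀ α ∈ S, ∀ w ∈ disk R,
      ∃ l : ℂ, Tendsto (fun m => ∑ n ∈ Finset.range m, f n α * w ^ n) atTop (𝓝 l)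

/-- Condition (C2). -/
def CondC2 {N : ℕ} (f : ℕ → (Fin N → ℂ) → ℂ) (D₁ : Set (Fin N → ℂ)) (R : ℝ≥0∞) : Prop :=
  ∃ (t : ℕ) (Φ : ℕ → (Fin N → ℂ) × ℂ → ℂ) (g : ℕ → ℕ → (Fin N → ℂ) → ℂ),
    1 ≤ t ∧
    (∀ j, j ≤ t → DifferentiableOn ℂ (Φ j) (D₁ ×ˢ disk R)) ∧
    (∀ j n, j ≤ t → DifferentiableOn ℂ (g j n) D₁) ∧
    (∀ j, j ≤ t → ∀ p ∈ D₁ ×ˢ disk R,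
      Tendsto (fun m => ∑ n ∈ Finset.range m, g j n p.1 * p.2 ^ n) atTop (𝓝 (Φ j p))) ∧
    (∃ p ∈ D₁ ×ˢ disk R, Φ 0 p ≠ 0) ∧
    FormalAlgRel f g t D₁

/-! Since `Φ₀ ≡ 1`, at every point `α` of the dense set `S` the value `F(α, w)` of the convergent
series is a root of the monic polynomial `X ↦ ∑ⱼ Φⱼ(α, w) X^{t-j}`: all the series involved converge
absolutely, so the formal relation can be evaluated at `w`. Hence `‖F(α, w)‖ ≤ ∑ⱼ ‖Φⱼ(α, w)‖`,
a bound that is locally uniform on `D`. Cauchy's estimates turn it into locally uniform bounds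
`‖fₙ(α)‖ rⁿ ≤ M` for `r < R`, which pass from `S` to all of `D₁` by continuity of the `fₙ`. The
Hartogs series therefore converges locally uniformly on `D`, and a locally uniform limit of
holomorphic functions is holomorphic. -/

open Finset Metric FormalMultilinearSeries
open scoped NNReal

namespace PowerSeries

theorem map_evalRingHom_mk {X S : Type*} [Semiring S] (c : ℕ → X → S) (α : X) :
    map (Pi.evalRingHom (fun _ : X => S) α) (mk c) = mk fun n => c n α := by
  ext n; simp

variable {R : Type*} [NormedCommRing R]

theorem coeff_mul_mul_pow (φ ψ : R⟦X⟧) (w : R) (n : ℕ) :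
    coeff n (φ * ψ) * w ^ n =
      ∑ kl ∈ antidiagonal n, (coeff kl.1 φ * w ^ kl.1) * (coeff kl.2 ψ * w ^ kl.2) := by
  rw [coeff_mul, Finset.sum_mul]
  refine Finset.sum_congr rfl fun kl hkl => ?_
  rw [← mem_antidiagonal.mp hkl, pow_add]
  ring

def absConvSubring (w : R) : Subring R⟦X⟧ where
  carrier := {φ | Summable fun n => ‖coeff n φ * w ^ n‖}
  zero_mem' := by simp
  one_mem' := summable_of_ne_finset_zero (s := {0}) fun n hn => by
    simp [coeff_one, Finset.mem_singleton.not.mp hn]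
  add_mem' {φ ψ} hφ hψ := (hφ.add hψ).of_nonneg_of_le (fun _ => norm_nonneg _) fun n => by
    simpa only [map_add, add_mul] using norm_add_le _ _
  neg_mem' {φ} hφ := by simpa using hφ
  mul_mem' {φ ψ} hφ hψ := by
    simpa only [Set.mem_ofPred_eq, coeff_mul_mul_pow] using
      summable_norm_sum_mul_antidiagonal_of_summable_norm hφ hψ

theorem mem_absConvSubring {w : R} {φ : R⟦X⟧} :
    φ ∈ absConvSubring w ↔ Summable fun n => ‖coeff n φ * w ^ n‖ := Iff.rfl

noncomputable def absConvEval [CompleteSpace R] (w : R) : absConvSubring w →+* R where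
  toFun φ := ∑' n, coeff n (φ : R⟦X⟧) * w ^ n
  map_one' := by
    rw [tsum_eq_single 0 fun n hn => by simp [coeff_one, hn]]
    simp
  map_mul' φ ψ := by
    rw [tsum_mul_tsum_eq_tsum_sum_antidiagonal_of_summable_norm φ.2 ψ.2]
    simp only [Subring.coe_mul, coeff_mul_mul_pow]
  map_zero' := by simp
  map_add' φ ψ := by
    simp only [Subring.coe_add, map_add, add_mul]
    exact (Summable.of_norm φ.2).tsum_add (Summable.of_norm ψ.2)

theorem absConvEval_apply [CompleteSpace R] (w : R) (φ : absConvSubring w) :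
    absConvEval w φ = ∑' n, coeff n (φ : R⟦X⟧) * w ^ n := rfl

end PowerSeries

theorem norm_le_sum_norm_of_sum_mul_pow_eq_zero {K : Type*} [NormedField K] {t : ℕ} {c : ℕ → K}
    {x : K} (hc : c 0 = 1) (hx : ∑ j ∈ range (t + 1), c j * x ^ (t - j) = 0) :
    ‖x‖ ≤ ∑ j ∈ range (t + 1), ‖c j‖ := by
  obtain _ | t := t
  · simp [hc] at hx
  rw [sum_range_succ', hc, norm_one]
  rw [sum_range_succ', hc, one_mul, Nat.sub_zero] at hx
  simp only [Nat.add_sub_add_right] at hx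
  obtain hx1 | hx1 := le_or_gt ‖x‖ 1
  · exact hx1.trans (le_add_of_nonneg_left (sum_nonneg fun _ _ => norm_nonneg _))
  have hbound : ‖x‖ * ‖x‖ ^ t ≤ (∑ j ∈ range (t + 1), ‖c (j + 1)‖) * ‖x‖ ^ t := by
    calc ‖x‖ * ‖x‖ ^ t = ‖∑ j ∈ range (t + 1), c (j + 1) * x ^ (t - j)‖ := by
          rw [← pow_succ', ← norm_pow, eq_neg_of_add_eq_zero_right hx, norm_neg]
      _ ≤ ∑ j ∈ range (t + 1), ‖c (j + 1)‖ * ‖x‖ ^ t := by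
          refine (norm_sum_le _ _).trans (sum_le_sum fun j _ => ?_)
          rw [norm_mul, norm_pow]
          gcongr
          exacts [hx1.le, Nat.sub_le t j]
      _ = (∑ j ∈ range (t + 1), ‖c (j + 1)‖) * ‖x‖ ^ t := by rw [sum_mul]
  linarith [le_of_mul_le_mul_right hbound (by positivity)]

section LocallyUniformLimit

variable {E F : Type*} [NormedAddCommGroup E] [NormedSpace ℂ E] [NormedAddCommGroup F]
  [NormedSpace ℂ F]

theorem norm_fderiv_le_of_forall_mem_ball_norm_le {h : E → F} {x : E} {r B : ℝ} (hr : 0 < r)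
    (hd : DifferentiableOn ℂ h (ball x r)) (hB : ∀ y ∈ ball x r, ‖h y‖ ≤ B) :
    ‖fderiv ℂ h x‖ ≤ 2 * B / r := by
  have hB0 : 0 ≤ B := (norm_nonneg _).trans (hB x (mem_ball_self hr))
  refine ContinuousLinearMap.opNorm_le_bound _ (by positivity) fun v => ?_
  rcases eq_or_ne v 0 with rfl | hv
  · simp
  have hv0 : 0 < ‖v‖ := norm_pos_iff.mpr hv
  set ρ := r / (2 * ‖v‖)
  have hline : ∀ u ∈ closedBall (0 : ℂ) ρ, x + u • v ∈ ball x r := fun u hu => by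
    rw [mem_closedBall, dist_zero_right] at hu
    rw [mem_ball, dist_self_add_left, norm_smul]
    calc ‖u‖ * ‖v‖ ≤ ρ * ‖v‖ := by gcongr
      _ < r := by rw [div_mul_eq_mul_div, div_lt_iff₀ (by positivity)]; nlinarith
  have hdline : HasDerivAt (h ∘ fun u : ℂ => x + u • v) (fderiv ℂ h x v) 0 := by
    have hx : DifferentiableAt ℂ h (x + (0 : ℂ) • v) := by
      simpa using hd.differentiableAt (isOpen_ball.mem_nhds (mem_ball_self hr))
    simpa using hx.hasFDerivAt.comp_hasDerivAt (0 : ℂ)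
      (((hasDerivAt_id (0 : ℂ)).smul_const v).const_add x)
  -- Cauchy's estimate for `u ↦ h (x + u • v)` on the disc of radius `ρ`, which `hline` maps into
  -- `ball x r`
  have hcauchy := Complex.norm_deriv_le_of_forall_mem_sphere_norm_le (c := 0) (by positivity)
    ((hd.comp ((differentiable_id.smul_const v).const_add x).differentiableOn
      hline).diffContOnCl_ball subset_rfl)
    fun u hu => hB _ (hline u (sphere_subset_closedBall hu))
  rw [hdline.deriv] at hcauchy
  calc ‖fderiv ℂ h x v‖ ≤ B / ρ := hcauchy
    _ = 2 * B / r * ‖v‖ := by simp only [ρ]; field_simp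

theorem UniformCauchySeqOn.fderiv_ball {G : ℕ → E → F} {x : E} {r : ℝ} (hr : 0 < r)
    (hd : ∀ n, DifferentiableOn ℂ (G n) (ball x r))
    (hG : UniformCauchySeqOn G atTop (ball x r)) :
    UniformCauchySeqOn (fun n => fderiv ℂ (G n)) atTop (ball x (r / 2)) := by
  rw [Metric.uniformCauchySeqOn_iff] at hG ⊢
  intro η hη
  obtain ⟨n₀, hn₀⟩ := hG (η * r / 8) (by positivity)
  refine ⟨n₀, fun m hm k hk y hy => ?_⟩
  have hsub : ball y (r / 2) ⊆ ball x r := ball_subset_ball' (by linarith [mem_ball.mp hy])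
  have hy' : ball x r ∈ 𝓝 y := isOpen_ball.mem_nhds (hsub (mem_ball_self (by positivity)))
  have hest := norm_fderiv_le_of_forall_mem_ball_norm_le (half_pos hr)
    (((hd m).fun_sub (hd k)).mono hsub) fun z hz => by
      rw [← dist_eq_norm]; exact (hn₀ m hm k hk z (hsub hz)).le
  rw [fderiv_fun_sub ((hd m).differentiableAt hy') ((hd k).differentiableAt hy')] at hest
  rw [dist_eq_norm]
  calc _ ≤ 2 * (η * r / 8) / (r / 2) := hest
    _ < η := by field_simp; linarith

theorem TendstoLocallyUniformlyOn.differentiableOn_of_locallyCompactSpace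
    [LocallyCompactSpace E] [CompleteSpace F] {G : ℕ → E → F} {g : E → F} {s : Set E}
    (hs : IsOpen s) (hG : TendstoLocallyUniformlyOn G g atTop s)
    (hd : ∀ n, DifferentiableOn ℂ (G n) s) : DifferentiableOn ℂ g s := by
  intro x hx
  have hnhds : TendstoLocallyUniformlyOn G g atTop s ↔
      ∀ x ∈ s, ∃ v ∈ 𝓝[s] x, TendstoUniformlyOn G g atTop v :=
    (tendstoLocallyUniformlyOn_TFAE G g atTop hs).out 0 2
  obtain ⟨v, hv, hGv⟩ := hnhds.mp hG x hx
  rw [hs.nhdsWithin_eq hx] at hv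
  obtain ⟨r, hr, hrv⟩ := Metric.mem_nhds_iff.mp (inter_mem hv (hs.mem_nhds hx))
  have hdr : ∀ n, DifferentiableOn ℂ (G n) (ball x r) := fun n =>
    (hd n).mono fun y hy => (hrv hy).2
  have hGr : TendstoUniformlyOn G g atTop (ball x r) := hGv.mono fun y hy => (hrv hy).1
  have hcauchy := hGr.uniformCauchySeqOn.fderiv_ball hr hdr
  have hlim := hcauchy.tendstoUniformlyOn_of_tendsto
    (f := fun y => limUnder atTop fun n => fderiv ℂ (G n) y) fun y hy =>
    (hcauchy.cauchySeq hy).tendsto_limUnder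
  have hsub : ball x (r / 2) ⊆ ball x r := ball_subset_ball (by linarith)
  have hderiv : ∀ n, ∀ y ∈ ball x (r / 2), HasFDerivAt (G n) (fderiv ℂ (G n) y) y := fun n y hy =>
    ((hdr n).differentiableAt (isOpen_ball.mem_nhds (hsub hy))).hasFDerivAt
  exact (hasFDerivAt_of_tendstoUniformlyOn isOpen_ball hlim hderiv
    (fun y hy => hGr.tendsto_at (hsub hy)) (mem_ball_self (half_pos hr))).differentiableAt
    |>.differentiableWithinAt

end LocallyUniformLimit

theorem tendsto_zero_of_tendsto_sum_range {E : Type*} [AddCommGroup E] [TopologicalSpace E]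
    [IsTopologicalAddGroup E] {a : ℕ → E} {l : E}
    (h : Tendsto (fun m => ∑ n ∈ range m, a n) atTop (𝓝 l)) : Tendsto a atTop (𝓝 0) := by
  simpa [sum_range_succ_sub_sum] using (h.comp (tendsto_add_atTop_nat 1)).sub h

theorem disk_eq_eball (R : ℝ≥0∞) : disk R = eball (0 : ℂ) R := by
  ext w; simp [disk, enorm_eq_nnnorm]

theorem isOpen_disk (R : ℝ≥0∞) : IsOpen (disk R) := by
  rw [disk_eq_eball]; exact isOpen_eball

theorem le_radius_ofScalars_of_forall_tendsto {a : ℕ → ℂ} {R : ℝ≥0∞}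
    (h : ∀ w ∈ disk R, ∃ l, Tendsto (fun m => ∑ n ∈ range m, a n * w ^ n) atTop (𝓝 l)) :
    R ≤ (ofScalars ℂ a).radius := by
  refine ENNReal.le_of_forall_nnreal_lt fun ρ hρ => ?_
  obtain ⟨l, hl⟩ := h ρ (by simpa [disk] using hρ)
  refine (ofScalars ℂ a).le_radius_of_tendsto (l := 0) ?_
  simpa [ofScalars_norm] using (tendsto_zero_of_tendsto_sum_range hl).norm

theorem summable_norm_mul_pow_of_mem_disk {a : ℕ → ℂ} {R : ℝ≥0∞} {w : ℂ}
    (hR : R ≤ (ofScalars ℂ a).radius) (hw : w ∈ disk R) : Summable fun n => ‖a n * w ^ n‖ := by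
  have hw' : w ∈ eball (0 : ℂ) (ofScalars ℂ a).radius :=
    eball_subset_eball hR (by rwa [← disk_eq_eball])
  simpa [ofScalars_apply_eq, mul_comm] using (ofScalars ℂ a).summable_norm_apply hw'

theorem norm_mul_pow_le_of_forall_mem_sphere {a : ℕ → ℂ} {r M : ℝ} (hr : 0 < r)
    (hrad : ENNReal.ofReal r < (ofScalars ℂ a).radius)
    (hM : ∀ w ∈ sphere (0 : ℂ) r, ‖∑' n, a n * w ^ n‖ ≤ M) (n : ℕ) : ‖a n‖ * r ^ n ≤ M := by
  set p := ofScalars ℂ a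
  have hp : HasFPowerSeriesOnBall p.sum p 0 p.radius :=
    p.hasFPowerSeriesOnBall (bot_le.trans_lt hrad)
  have hsum : ∀ w, p.sum w = ∑' n, a n * w ^ n := fun w => by
    simp [p, FormalMultilinearSeries.sum, mul_comm]
  have hclosed : closedBall (0 : ℂ) r ⊆ eball 0 p.radius := fun w hw => by
    rw [mem_closedBall, dist_zero_right] at hw
    rw [mem_eball, edist_zero_right]
    exact lt_of_le_of_lt (by rw [← ofReal_norm]; exact ENNReal.ofReal_le_ofReal hw) hrad
  have hcauchy := Complex.norm_iteratedDeriv_le_of_forall_mem_sphere_norm_le n hr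
    (hp.differentiableOn.diffContOnCl_ball hclosed) fun w hw => (hsum w).symm ▸ hM w hw
  have hderiv : iteratedDeriv n p.sum 0 = n.factorial * a n := by
    rw [iteratedDeriv_eq_iteratedFDeriv, ← hp.factorial_smul 1 n]
    simp [p]
  rw [hderiv, norm_mul, Complex.norm_natCast, mul_div_assoc] at hcauchy
  have hcoeff := le_of_mul_le_mul_left hcauchy (by positivity)
  rwa [le_div_iff₀ (by positivity)] at hcoeff

theorem tendstoLocallyUniformlyOn_sum_mul_pow {X : Type*} [TopologicalSpace X] {f : ℕ → X → ℂ}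
    {U : Set X} {R : ℝ≥0∞}
    (hbound : ∀ z ∈ U, ∀ r : ℝ≥0, 0 < r → (r : ℝ≥0∞) < R →
      ∃ V ∈ 𝓝 z, ∃ M, ∀ y ∈ V, ∀ n, ‖f n y‖ * r ^ n ≤ M) :
    TendstoLocallyUniformlyOn (fun m p => ∑ n ∈ range m, f n p.1 * p.2 ^ n)
      (fun p => ∑' n, f n p.1 * p.2 ^ n) atTop (U ×ˢ disk R) := by
  refine tendstoLocallyUniformlyOn_of_forall_exists_nhds ?_
  rintro ⟨z, w⟩ ⟨hz, hw⟩
  obtain ⟨r, hwr, hrR⟩ := ENNReal.lt_iff_exists_nnreal_btwn.mp hw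
  have hwr' : ‖w‖ < r := by exact_mod_cast hwr
  have hr : 0 < r := by exact_mod_cast (norm_nonneg w).trans_lt hwr'
  obtain ⟨V, hV, M, hM⟩ := hbound z hz r hr hrR
  obtain ⟨ρ, hwρ, hρr⟩ := exists_between hwr'
  have hρ0 : 0 ≤ ρ / r := div_nonneg ((norm_nonneg w).trans hwρ.le) r.2
  have hρ1 : ρ / r < 1 := (div_lt_one (by positivity)).mpr hρr
  refine ⟨V ×ˢ ball 0 ρ, nhdsWithin_le_nhds (prod_mem_nhds hV (isOpen_ball.mem_nhds ?_)), ?_⟩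
  · rwa [mem_ball, dist_zero_right]
  refine tendstoUniformlyOn_tsum_nat
    ((summable_geometric_of_lt_one hρ0 hρ1).mul_left M) ?_
  rintro n ⟨y, u⟩ ⟨hy, hu⟩
  rw [mem_ball, dist_zero_right] at hu
  calc ‖f n y * u ^ n‖ = ‖f n y‖ * r ^ n * (‖u‖ / r) ^ n := by
        rw [norm_mul, norm_pow, div_pow, mul_assoc, mul_div_cancel₀ _ (by positivity)]
    _ ≤ ‖f n y‖ * r ^ n * (ρ / r) ^ n := by gcongr
    _ ≤ M * (ρ / r) ^ n := mul_le_mul_of_nonneg_right (hM y hy n) (pow_nonneg hρ0 n)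

theorem exists_nhds_norm_mul_pow_le {X : Type*} [TopologicalSpace X] [LocallyCompactSpace X]
    {f : ℕ → X → ℂ} {D₁ S : Set X} {R : ℝ≥0∞} {B : X × ℂ → ℝ} (hD₁ : IsOpen D₁)
    (hf : ∀ n, ContinuousOn (f n) D₁) (hS : D₁ ⊆ closure S) (hB : ContinuousOn B (D₁ ×ˢ disk R))
    (hrad : ∀ α ∈ S, R ≤ (ofScalars ℂ (f · α)).radius)
    (hle : ∀ α ∈ S, ∀ w ∈ disk R, ‖∑' n, f n α * w ^ n‖ ≤ B (α, w)) :
    ∀ z ∈ D₁, ∀ r : ℝ≥0, 0 < r → (r : ℝ≥0∞) < R →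
      ∃ V ∈ 𝓝 z, ∃ M, ∀ y ∈ V, ∀ n, ‖f n y‖ * r ^ n ≤ M := by
  intro z hz r hr hrR
  obtain ⟨K, hK, hzK, hKD⟩ := exists_compact_subset hD₁ hz
  have hsphere : sphere (0 : ℂ) r ⊆ disk R := fun w hw => by
    have hw' : ‖w‖₊ = r := NNReal.eq (mem_sphere_zero_iff_norm.mp hw)
    simpa [disk, hw'] using hrR
  obtain ⟨C, hC⟩ := ((hK.prod (isCompact_sphere 0 r)).bddAbove_image
    (hB.mono (Set.prod_mono hKD hsphere)))
  refine ⟨interior K, isOpen_interior.mem_nhds hzK, C, fun y hy n => ?_⟩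
  have hcont : ContinuousAt (fun y => ‖f n y‖ * r ^ n) y :=
    ((hf n).continuousAt (hD₁.mem_nhds (hKD (interior_subset hy)))).norm.mul_const _
  -- Cauchy's estimate gives the bound on `interior K ∩ S`, continuity of `f n` on its closure
  refine ContinuousWithinAt.closure_le (s := interior K ∩ S)
    (isOpen_interior.inter_closure ⟨hy, hS (hKD (interior_subset hy))⟩)
    hcont.continuousWithinAt continuousWithinAt_const fun α ⟨hαK, hαS⟩ => ?_
  refine norm_mul_pow_le_of_forall_mem_sphere (a := (f · α)) hr ?_ (fun w hw => ?_) n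
  · simpa using hrR.trans_le (hrad α hαS)
  · exact (hle α hαS w (hsphere hw)).trans
      (hC (Set.mem_image_of_mem _ ⟨interior_subset hαK, hw⟩))

open PowerSeries in
theorem FormalAlgRel.sum_tsum_mul_tsum_pow_eq_zero {N t : ℕ} {f : ℕ → (Fin N → ℂ) → ℂ}
    {g : ℕ → ℕ → (Fin N → ℂ) → ℂ} {D₁ : Set (Fin N → ℂ)} (hrel : FormalAlgRel f g t D₁)
    {α : Fin N → ℂ} (hα : α ∈ D₁) {w : ℂ}
    (hg : ∀ j ≤ t, Summable fun n => ‖g j n α * w ^ n‖) (hf : Summable fun n => ‖f n α * w ^ n‖) :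
    ∑ j ∈ range (t + 1), (∑' n, g j n α * w ^ n) * (∑' n, f n α * w ^ n) ^ (t - j) = 0 := by
  have hzero : ∑ j ∈ range (t + 1), mk (fun n => g j n α) * mk (fun n => f n α) ^ (t - j) = 0 := by
    ext m
    simpa [← map_evalRingHom_mk, ← map_pow, ← map_mul, ← map_sum] using hrel m α hα
  let F : absConvSubring w := ⟨mk fun n => f n α, by simpa [mem_absConvSubring] using hf⟩
  let A : range (t + 1) → absConvSubring w := fun j => ⟨mk fun n => g j n α, by
    simpa [mem_absConvSubring] using hg j (Nat.lt_succ_iff.mp (mem_range.mp j.2))⟩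
  have hsub : ∑ j : range (t + 1), A j * F ^ (t - j) = 0 := by
    ext1
    simpa [A, F, sum_attach (range (t + 1)) fun j => mk (g j · α) * mk (f · α) ^ (t - j)]
      using hzero
  have heval := congrArg (absConvEval w) hsub
  simp only [map_sum, map_mul, map_pow, map_zero, absConvEval_apply, coeff_mk, A, F] at heval
  rwa [sum_coe_sort (range (t + 1))
    fun j => (∑' n, g j n α * w ^ n) * (∑' n, f n α * w ^ n) ^ (t - j)] at heval

theorem FormalAlgRel.norm_tsum_le_sum_norm {N t : ℕ} {f : ℕ → (Fin N → ℂ) → ℂ}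
    {g : ℕ → ℕ → (Fin N → ℂ) → ℂ} {D₁ : Set (Fin N → ℂ)} {R : ℝ≥0∞} (hrel : FormalAlgRel f g t D₁)
    {α : Fin N → ℂ} (hα : α ∈ D₁) (hfR : R ≤ (ofScalars ℂ (f · α)).radius)
    (hgR : ∀ j ≤ t, R ≤ (ofScalars ℂ (g j · α)).radius) {w : ℂ} (hw : w ∈ disk R) {c : ℕ → ℂ}
    (hc : ∀ j ≤ t, Tendsto (fun m => ∑ n ∈ range m, g j n α * w ^ n) atTop (𝓝 (c j)))
    (hc0 : c 0 = 1) :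
    ‖∑' n, f n α * w ^ n‖ ≤ ∑ j ∈ range (t + 1), ‖c j‖ := by
  have hg : ∀ j ≤ t, Summable fun n => ‖g j n α * w ^ n‖ := fun j hj =>
    summable_norm_mul_pow_of_mem_disk (hgR j hj) hw
  refine norm_le_sum_norm_of_sum_mul_pow_eq_zero hc0 ?_
  rw [← hrel.sum_tsum_mul_tsum_pow_eq_zero hα hg (summable_norm_mul_pow_of_mem_disk hfR hw)]
  refine sum_congr rfl fun j hj => ?_
  have hj : j ≤ t := Nat.lt_succ_iff.mp (mem_range.mp hj)
  rw [tendsto_nhds_unique (hc j hj) (hg j hj).of_norm.hasSum.tendsto_sum_nat]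

theorem differentiableOn_sum_mul_pow {E : Type*} [NormedAddCommGroup E] [NormedSpace ℂ E]
    {f : ℕ → E → ℂ} {U : Set E} (hf : ∀ n, DifferentiableOn ℂ (f n) U) (V : Set ℂ) (m : ℕ) :
    DifferentiableOn ℂ (fun p : E × ℂ => ∑ n ∈ range m, f n p.1 * p.2 ^ n) (U ×ˢ V) :=
  DifferentiableOn.fun_sum fun n _ =>
    ((hf n).comp differentiableOn_fst fun _ hp => hp.1).mul (differentiableOn_snd.pow n)

theorem hartogs_series_holomorphic_of_graph_discriminant_general
    (N : ℕ)
    (D₁ : Set (Fin N → ℂ)) (hD₁open : IsOpen D₁)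
    (R : ℝ≥0∞)
    (f : ℕ → (Fin N → ℂ) → ℂ) (hf : ∀ n, DifferentiableOn ℂ (f n) D₁)
    (hC1 : CondC1 f D₁ R)
    -- condition (C2) with a monic relation: `Φ₀ ≡ 1` and `t ≥ 2`:
    (t : ℕ)
    (Φ : ℕ → (Fin N → ℂ) × ℂ → ℂ) (g : ℕ → ℕ → (Fin N → ℂ) → ℂ)
    (hΦ : ∀ j, j ≤ t → DifferentiableOn ℂ (Φ j) (D₁ ×ˢ disk R))
    (hexp : ∀ j, j ≤ t → ∀ p ∈ D₁ ×ˢ disk R,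
      Tendsto (fun m => ∑ n ∈ Finset.range m, g j n p.1 * p.2 ^ n) atTop (𝓝 (Φ j p)))
    (hΦ0 : ∀ p ∈ D₁ ×ˢ disk R, Φ 0 p = 1)
    (hrel : FormalAlgRel f g t D₁)
    -- `T_Δ` is a disjoint union of graphs of holomorphic functions on `D₁`:
    (m : ℕ) :
    HolSumOn f (D₁ ×ˢ disk R) := by
  obtain ⟨S, hSD, hS, hSconv⟩ := hC1
  have hfR : ∀ α ∈ S, R ≤ (ofScalars ℂ (f · α)).radius := fun α hα =>
    le_radius_ofScalars_of_forall_tendsto (hSconv α hα)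
  have hroot : ∀ α ∈ S, ∀ w ∈ disk R,
      ‖∑' n, f n α * w ^ n‖ ≤ ∑ j ∈ range (t + 1), ‖Φ j (α, w)‖ := fun α hα w hw =>
    hrel.norm_tsum_le_sum_norm (hSD hα) (hfR α hα)
      (fun j hj => le_radius_ofScalars_of_forall_tendsto fun u hu =>
        ⟨_, hexp j hj (α, u) ⟨hSD hα, hu⟩⟩)
      hw (fun j hj => hexp j hj (α, w) ⟨hSD hα, hw⟩) (hΦ0 _ ⟨hSD hα, hw⟩)
  have hB : ContinuousOn (fun p => ∑ j ∈ range (t + 1), ‖Φ j p‖) (D₁ ×ˢ disk R) :=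
    continuousOn_finsetSum _ fun j hj =>
      (hΦ j (Nat.lt_succ_iff.mp (mem_range.mp hj))).continuousOn.norm
  have hlim := tendstoLocallyUniformlyOn_sum_mul_pow
    (exists_nhds_norm_mul_pow_le hD₁open (fun n => (hf n).continuousOn) hS hB hfR hroot)
  exact ⟨_, hlim.differentiableOn_of_locallyCompactSpace (hD₁open.prod (isOpen_disk R))
    (differentiableOn_sum_mul_pow hf _), fun p hp => hlim.tendsto_at hp⟩

/-- **Step 3 lemma.** Suppose `F` satisfies (C1) and a monic algebraic relation (`Φ₀ ≡ 1`,
`t ≥ 2`). Let `Δ` be a holomorphic function on `D` vanishing exactly where the polynomial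
`∑ Φⱼ(z,w) X^{t-j}` has a repeated complex root, with zero set `T_Δ`. If `D₁` is simply
connected and `T_Δ` is a disjoint union of graphs of holomorphic functions `f₁, …, f_m` on
`D₁`, then `F` converges and is holomorphic on `D`. -/
theorem hartogs_series_holomorphic_of_graph_discriminant
    (N : ℕ) (hN : 1 ≤ N)
    (D₁ : Set (Fin N → ℂ)) (hD₁open : IsOpen D₁) (hD₁conn : IsConnected D₁)
    (R : ℝ≥0∞) (hR : 0 < R)
    (f : ℕ → (Fin N → ℂ) → ℂ) (hf : ∀ n, DifferentiableOn ℂ (f n) D₁)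
    (hC1 : CondC1 f D₁ R)
    -- condition (C2) with a monic relation: `Φ₀ ≡ 1` and `t ≥ 2`:
    (t : ℕ) (ht : 2 ≤ t)
    (Φ : ℕ → (Fin N → ℂ) × ℂ → ℂ) (g : ℕ → ℕ → (Fin N → ℂ) → ℂ)
    (hΦ : ∀ j, j ≤ t → DifferentiableOn ℂ (Φ j) (D₁ ×ˢ disk R))
    (hg : ∀ j n, j ≤ t → DifferentiableOn ℂ (g j n) D₁)
    (hexp : ∀ j, j ≤ t → ∀ p ∈ D₁ ×ˢ disk R,
      Tendsto (fun m => ∑ n ∈ Finset.range m, g j n p.1 * p.2 ^ n) atTop (𝓝 (Φ j p)))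
    (hΦ0 : ∀ p ∈ D₁ ×ˢ disk R, Φ 0 p = 1)
    (hg00 : ∀ z ∈ D₁, g 0 0 z = 1)
    (hg0n : ∀ n, 1 ≤ n → ∀ z ∈ D₁, g 0 n z = 0)
    (hrel : FormalAlgRel f g t D₁)
    -- `Δ` vanishes exactly where the polynomial has a repeated complex root:
    (Δ : (Fin N → ℂ) × ℂ → ℂ) (hΔ : DifferentiableOn ℂ Δ (D₁ ×ˢ disk R))
    (hΔzero : ∀ p ∈ D₁ ×ˢ disk R, (Δ p = 0 ↔ ∃ x : ℂ, (Polynomial.X - Polynomial.C x) ^ 2 ∣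
      ∑ j ∈ Finset.range (t + 1), Polynomial.C (Φ j p) * Polynomial.X ^ (t - j)))
    -- `D₁` is simply connected:
    (hsc : SimplyConnectedSpace ↥D₁)
    -- `T_Δ` is a disjoint union of graphs of holomorphic functions on `D₁`:
    (m : ℕ) (fk : Fin m → (Fin N → ℂ) → ℂ)
    (hfk : ∀ k, DifferentiableOn ℂ (fk k) D₁)
    (hTΔ : {p ∈ D₁ ×ˢ disk R | Δ p = 0} =
      ⋃ k : Fin m, {p ∈ D₁ ×ˢ disk R | p.2 = fk k p.1})
    (hdisj : ∀ k l : Fin m, k ≠ l →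
      {p ∈ D₁ ×ˢ disk R | p.2 = fk k p.1} ∩ {p ∈ D₁ ×ˢ disk R | p.2 = fk l p.1} = ∅) :
    HolSumOn f (D₁ ×ˢ disk R) :=
  hartogs_series_holomorphic_of_graph_discriminant_general N D₁ hD₁open R f hf hC1 t Φ g hΦ hexp hΦ0
    hrel m

end
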